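/- arXiv:1305.2393 — 5 statements merged into one kernel-verified Lean document; each statement's English description precedes it below -/
import Mathlib

section
/- For F ∈ GL⁺(n,ℝ) with polar decomposition F = R·U, and for every Q ∈ SO(n), one has ‖QᵀF − Id‖ = ‖F − Q‖; hence min_{Q∈SO(n)} ‖QᵀF − Id‖² = ‖U − Id‖². -/
open Matrix

noncomputable def frobSq {n : ℕ} (X : Matrix (Fin n) (Fin n) ℝ) : ℝ :=
  Matrix.trace (Xᵀ * X)

noncomputable def symPart {n : ℕ} (X : Matrix (Fin n) (Fin n) ℝ) : Matrix (Fin n) (Fin n) ℝ :=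
  (1 / 2 : ℝ) • (X + Xᵀ)

noncomputable def skewPart {n : ℕ} (X : Matrix (Fin n) (Fin n) ℝ) : Matrix (Fin n) (Fin n) ℝ :=
  (1 / 2 : ℝ) • (X - Xᵀ)

noncomputable def devPart {n : ℕ} (X : Matrix (Fin n) (Fin n) ℝ) : Matrix (Fin n) (Fin n) ℝ :=
  X - (Matrix.trace X / (n : ℝ)) • (1 : Matrix (Fin n) (Fin n) ℝ)

def SOn (n : ℕ) : Set (Matrix (Fin n) (Fin n) ℝ) :=
  {Q | Qᵀ * Q = 1 ∧ Q.det = 1}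

/-!
For orthogonal `Q`, `Qᵀ F - 1 = Qᵀ (F - Q)` has the same norm as `F - Q`. With `F = R U`, the
distance from `F` to `Q` is the distance from `U` to the orthogonal matrix `P = Rᵀ Q`, and
`‖U - P‖² - ‖U - 1‖² = 2 (tr U - tr (P U))`. Writing `U = Sᵀ S`, this is `‖S - S P‖² ≥ 0`, so the
minimum over `SO(n)` is attained at `Q = R`.
-/

theorem trace_transpose_mul_self_nonneg {m : Type*} [Fintype m] (A : Matrix m m ℝ) :
    0 ≤ trace (Aᵀ * A) := by
  simpa only [conjTranspose_eq_transpose_of_trivial] using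
    (posSemidef_conjTranspose_mul_self A).trace_nonneg

theorem Matrix.PosSemidef.exists_eq_transpose_mul_self {m : Type*} [Fintype m] [DecidableEq m]
    {U : Matrix m m ℝ} (hU : U.PosSemidef) : ∃ S : Matrix m m ℝ, U = Sᵀ * S := by
  open scoped MatrixOrder in
  exact ⟨CFC.sqrt U, by
    rw [← conjTranspose_eq_transpose_of_trivial, (CFC.sqrt_nonneg U).posSemidef.1.eq,
      CFC.sqrt_mul_sqrt_self U hU.nonneg]⟩

theorem trace_orthogonal_mul_le_trace {m : Type*} [Fintype m] [DecidableEq m]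
    {P U : Matrix m m ℝ} (hP : Pᵀ * P = 1) (hU : U.PosSemidef) :
    trace (P * U) ≤ trace U := by
  obtain ⟨S, rfl⟩ := hU.exists_eq_transpose_mul_self
  have hPPt : P * Pᵀ = 1 := mul_eq_one_comm.mp hP
  have hgap : trace ((S - S * P)ᵀ * (S - S * P)) =
      2 * (trace (Sᵀ * S) - trace (P * (Sᵀ * S))) := by
    have h₁ : trace (Sᵀ * (S * P)) = trace (P * (Sᵀ * S)) := by
      rw [← mul_assoc, trace_mul_comm]
    have h₂ : trace ((S * P)ᵀ * S) = trace (P * (Sᵀ * S)) := by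
      rw [← trace_transpose, transpose_mul, transpose_transpose, h₁]
    have h₃ : trace ((S * P)ᵀ * (S * P)) = trace (Sᵀ * S) := by
      rw [transpose_mul, mul_assoc, ← mul_assoc Sᵀ, trace_mul_comm, mul_assoc, hPPt, mul_one]
    rw [transpose_sub, sub_mul, mul_sub, mul_sub, trace_sub, trace_sub, trace_sub, h₁, h₂, h₃]
    ring
  linarith [trace_transpose_mul_self_nonneg (S - S * P)]

theorem transpose_mul_transpose_of_orthogonal {m : Type*} [Fintype m] [DecidableEq m]
    {Q : Matrix m m ℝ} (hQ : Qᵀ * Q = 1) : Qᵀᵀ * Qᵀ = 1 := by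
  rw [transpose_transpose, mul_eq_one_comm.mp hQ]

section

variable {n : ℕ}

theorem frobSq_sub (A B : Matrix (Fin n) (Fin n) ℝ) :
    frobSq (A - B) = frobSq A - 2 * trace (Aᵀ * B) + frobSq B := by
  have hsymm : trace (Bᵀ * A) = trace (Aᵀ * B) := by
    rw [← trace_transpose, transpose_mul, transpose_transpose]
  simp only [frobSq, transpose_sub, sub_mul, mul_sub, trace_sub, hsymm]
  ring

theorem frobSq_orthogonal_mul {Q : Matrix (Fin n) (Fin n) ℝ} (hQ : Qᵀ * Q = 1)
    (X : Matrix (Fin n) (Fin n) ℝ) : frobSq (Q * X) = frobSq X := by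
  rw [frobSq, frobSq, transpose_mul, mul_assoc, ← mul_assoc Qᵀ, hQ, one_mul]

theorem frobSq_of_orthogonal {Q : Matrix (Fin n) (Fin n) ℝ} (hQ : Qᵀ * Q = 1) :
    frobSq Q = n := by
  rw [frobSq, hQ, trace_one, Fintype.card_fin]

theorem frobSq_transpose_mul_sub_one {Q : Matrix (Fin n) (Fin n) ℝ} (hQ : Qᵀ * Q = 1)
    (F : Matrix (Fin n) (Fin n) ℝ) : frobSq (Qᵀ * F - 1) = frobSq (F - Q) := by
  rw [← frobSq_orthogonal_mul (transpose_mul_transpose_of_orthogonal hQ) (F - Q), mul_sub, hQ]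

theorem frobSq_sub_one_le_frobSq_sub {P U : Matrix (Fin n) (Fin n) ℝ} (hP : Pᵀ * P = 1)
    (hU : U.PosSemidef) : frobSq (U - 1) ≤ frobSq (U - P) := by
  have hUt : Uᵀ = U := (isHermitian_iff_isSymm.mp hU.1).eq
  have htrace : trace (U * P) ≤ trace U := by
    rw [trace_mul_comm]
    exact trace_orthogonal_mul_le_trace hP hU
  have hone : frobSq (1 : Matrix (Fin n) (Fin n) ℝ) = n :=
    frobSq_of_orthogonal (by rw [transpose_one, one_mul])
  rw [frobSq_sub, frobSq_sub, frobSq_of_orthogonal hP, hone, hUt, mul_one]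
  linarith

end

theorem stmt3_general (n : ℕ) (F R U : Matrix (Fin n) (Fin n) ℝ)
    (hR : R ∈ SOn n) (hUpos : U.PosDef)
    (hpolar : F = R * U) :
    (∀ Q ∈ SOn n, frobSq (Qᵀ * F - 1) = frobSq (F - Q)) ∧
    IsLeast {v : ℝ | ∃ Q ∈ SOn n, v = frobSq (Qᵀ * F - 1)} (frobSq (U - 1)) := by
  have hdist : ∀ Q ∈ SOn n, frobSq (Qᵀ * F - 1) = frobSq (F - Q) :=
    fun Q hQ => frobSq_transpose_mul_sub_one hQ.1 F
  have hRU : Rᵀ * F = U := by rw [hpolar, ← mul_assoc, hR.1, one_mul]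
  refine ⟨hdist, ⟨R, hR, by rw [hRU]⟩, ?_⟩
  rintro _ ⟨Q, hQ, rfl⟩
  have hRt : Rᵀᵀ * Rᵀ = 1 := transpose_mul_transpose_of_orthogonal hR.1
  have hP : (Rᵀ * Q)ᵀ * (Rᵀ * Q) = 1 := by
    rw [transpose_mul, mul_assoc, ← mul_assoc Rᵀᵀ, hRt, one_mul, hQ.1]
  calc frobSq (U - 1) ≤ frobSq (U - Rᵀ * Q) := frobSq_sub_one_le_frobSq_sub hP hUpos.posSemidef
    _ = frobSq (Rᵀ * (F - Q)) := by rw [mul_sub, hRU]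
    _ = frobSq (F - Q) := frobSq_orthogonal_mul hRt _
    _ = frobSq (Qᵀ * F - 1) := (hdist Q hQ).symm

/-- ‖QᵀF − 1‖ = ‖F − Q‖ for any Q ∈ SO(n), hence the minimum of ‖QᵀF − 1‖² over SO(n)
equals ‖U − 1‖². -/
theorem stmt3 (n : ℕ) (F R U : Matrix (Fin n) (Fin n) ℝ)
    (hF : 0 < F.det) (hR : R ∈ SOn n)
    (hUsym : Uᵀ = U) (hUpos : U.PosDef) (hUsq : U * U = Fᵀ * F)
    (hpolar : F = R * U) :
    (∀ Q ∈ SOn n, frobSq (Qᵀ * F - 1) = frobSq (F - Q)) ∧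
    IsLeast {v : ℝ | ∃ Q ∈ SOn n, v = frobSq (Qᵀ * F - 1)} (frobSq (U - 1)) :=
  stmt3_general n F R U hR hUpos hpolar
end

section
/- Let X ∈ ℝ^{n×n} with exp(X) symmetric positive definite, and let S = log(exp X) be the principal logarithm (so S is symmetric). Then ‖X‖ ≥ ‖S‖ in the Frobenius norm; i.e., among all real matrix logarithms of a symmetric positive definite matrix P, the principal (symmetric) logarithm has minimal Frobenius norm. -/
open Matrix

/-!
Diagonalize `S = U D Uᵀ` with `U` orthogonal and conjugate `X` by `U`: this preserves the
Frobenius norm, so we may assume `S = D` diagonal. Then `X` commutes with `exp X = exp D`, hence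
with `D` since `Real.exp` is injective, so `Z = X - D` commutes with `D` and `exp Z = 1`. On each
eigenspace of `D` the block of `Z` has exponential `1`, so its eigenvalues lie in `2πiℤ` and its
trace vanishes. Summing over eigenvalues gives `tr (D Z) = 0`, whence
`‖X‖² = ‖D‖² + ‖Z‖² ≥ ‖D‖²`.
-/

open NormedSpace

theorem exp_mul_of_isIdempotentElem {𝔸 : Type*} [NormedRing 𝔸] [NormedAlgebra ℚ 𝔸]
    [CompleteSpace 𝔸] {e a : 𝔸} (he : IsIdempotentElem e) (hea : Commute e a) :
    exp (e * a) = 1 - e + e * exp a := by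
  have hpow : ∀ k, (e * a) ^ k = (if k = 0 then 1 - e else 0) + e * a ^ k := by
    rintro (_ | k)
    · simp
    · rw [hea.mul_pow, he.pow_succ_eq]; simp
  have hsum :
      HasSum (fun k : ℕ => ((k.factorial : ℚ)⁻¹) • (e * a) ^ k) (1 - e + e * exp a) := by
    simp only [hpow, smul_add]
    refine HasSum.add ?_ ?_
    · convert hasSum_ite_eq 0 (1 - e) using 1
      ext k; split_ifs <;> simp_all
    · simpa only [mul_smul_comm] using (exp_series_hasSum_exp' (𝕂 := ℚ) a).mul_left e
  exact (exp_series_hasSum_exp' (𝕂 := ℚ) (e * a)).unique hsum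

namespace Matrix

variable {m : Type*} [Fintype m] [DecidableEq m]

theorem commute_diagonal_iff {R : Type*} [CommRing R] [NoZeroDivisors R] {d : m → R}
    {W : Matrix m m R} : Commute (diagonal d) W ↔ ∀ i j, d i ≠ d j → W i j = 0 := by
  simp only [commute_iff_eq, ← ext_iff, diagonal_mul, mul_diagonal]
  refine forall₂_congr fun i j => ?_
  rw [mul_comm, ← sub_eq_zero, ← mul_sub, mul_eq_zero, sub_eq_zero, or_comm,
    or_iff_not_imp_left]

theorem commute_diagonal_comp {R : Type*} [CommRing R] [NoZeroDivisors R] {d : m → R}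
    {W : Matrix m m R} (f : R → R) (h : Commute (diagonal d) W) :
    Commute (diagonal (f ∘ d)) W :=
  commute_diagonal_iff.mpr fun i j hij =>
    commute_diagonal_iff.mp h i j fun hd => hij (congrArg f hd)

theorem commute_diagonal_of_commute_diagonal_comp {R : Type*} [CommRing R] [NoZeroDivisors R]
    {d : m → R} {W : Matrix m m R} {f : R → R} (hf : Function.Injective f)
    (h : Commute (diagonal (f ∘ d)) W) : Commute (diagonal d) W :=
  commute_diagonal_iff.mpr fun i j hij =>
    commute_diagonal_iff.mp h i j (hf.ne hij)

theorem re_trace_eq_zero_of_exp_eq_one (M : Matrix m m ℂ) (h : exp M = 1) : M.trace.re = 0 := by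
  rcases isEmpty_or_nonempty m with _ | _
  · simp
  have hroot : ∀ ν ∈ M.charpoly.roots, ν.re = 0 := by
    intro ν hν
    have hspec : ν ∈ spectrum ℂ M :=
      mem_spectrum_of_isRoot_charpoly (Polynomial.isRoot_of_mem_roots hν)
    have hexp : exp ν ∈ spectrum ℂ (exp M) := by
      open scoped Norms.Operator in exact spectrum.exp_mem_exp M hspec
    rw [h, spectrum.one_eq, Set.mem_singleton_iff, ← Complex.exp_eq_exp_ℂ] at hexp
    obtain ⟨k, hk⟩ := Complex.exp_eq_one_iff.mp hexp
    simp [hk]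
  rw [trace_eq_sum_roots_charpoly, ← Complex.coe_reAddGroupHom, map_multiset_sum]
  exact Multiset.sum_eq_zero fun x hx => by
    obtain ⟨ν, hν, rfl⟩ := Multiset.mem_map.mp hx
    exact hroot ν hν

theorem trace_eq_zero_of_exp_eq_one (B : Matrix m m ℝ) (h : exp B = 1) : B.trace = 0 := by
  have hcont : Continuous ((algebraMap ℝ ℂ).mapMatrix : Matrix m m ℝ →+* Matrix m m ℂ) :=
    continuous_id.matrix_map Complex.continuous_ofReal
  have hmap : (algebraMap ℝ ℂ).mapMatrix (exp B) = exp ((algebraMap ℝ ℂ).mapMatrix B) :=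
    open scoped Norms.Operator in map_exp _ hcont B
  rw [h, map_one] at hmap
  simpa [trace, Complex.re_sum] using re_trace_eq_zero_of_exp_eq_one _ hmap.symm

theorem trace_diagonal_mul_eq_zero_of_exp_eq_one (μ : m → ℝ) (W : Matrix m m ℝ)
    (hcomm : Commute (diagonal μ) W) (hW : exp W = 1) : trace (diagonal μ * W) = 0 := by
  set E : ℝ → Matrix m m ℝ := fun c => diagonal fun i => if μ i = c then 1 else 0
  have hfiber : ∀ c, trace (E c * W) = 0 := fun c => by
    have hE : IsIdempotentElem (E c) := by
      simp [IsIdempotentElem, E, diagonal_mul_diagonal]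
    have hEW : Commute (E c) W := commute_diagonal_comp (fun x => if x = c then 1 else 0) hcomm
    have hexp : exp (E c * W) = 1 - E c + E c * exp W :=
      open scoped Norms.Operator in exp_mul_of_isIdempotentElem hE hEW
    rw [hW, mul_one, sub_add_cancel] at hexp
    exact trace_eq_zero_of_exp_eq_one _ hexp
  calc trace (diagonal μ * W) = ∑ i, μ i * W i i := by simp [trace, diagonal_mul]
    _ = ∑ c ∈ Finset.univ.image μ, ∑ i with μ i = c, μ i * W i i :=
        (Finset.sum_fiberwise_of_maps_to
          (fun i _ => Finset.mem_image_of_mem μ (Finset.mem_univ i)) _).symm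
    _ = ∑ c ∈ Finset.univ.image μ, c * trace (E c * W) := by
        refine Finset.sum_congr rfl fun c _ => ?_
        rw [Finset.sum_congr rfl fun i hi => by rw [(Finset.mem_filter.mp hi).2],
          ← Finset.mul_sum]
        simp [E, trace, diagonal_mul, Finset.sum_filter]
    _ = 0 := by simp [hfiber]

theorem exp_conjStarAlgAut {𝕜 : Type*} [RCLike 𝕜]
    (U : unitary (Matrix m m 𝕜)) (A : Matrix m m 𝕜) :
    exp (Unitary.conjStarAlgAut 𝕜 _ U A) = Unitary.conjStarAlgAut 𝕜 _ U (exp A) := by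
  simpa using exp_units_conj (Unitary.toUnits U) A

end Matrix

section FrobeniusNorm

variable {n : ℕ}

theorem frobSq_nonneg (A : Matrix (Fin n) (Fin n) ℝ) : 0 ≤ frobSq A := by
  simpa [frobSq] using (posSemidef_conjTranspose_mul_self A).trace_nonneg

theorem frobSq_add (A B : Matrix (Fin n) (Fin n) ℝ) :
    frobSq (A + B) = frobSq A + 2 * trace (Aᵀ * B) + frobSq B := by
  have hswap : trace (Bᵀ * A) = trace (Aᵀ * B) := by
    rw [← trace_transpose, transpose_mul, transpose_transpose]
  simp only [frobSq, transpose_add, add_mul, mul_add, trace_add, hswap]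
  ring

theorem frobSq_conjStarAlgAut (U : unitary (Matrix (Fin n) (Fin n) ℝ))
    (A : Matrix (Fin n) (Fin n) ℝ) : frobSq (Unitary.conjStarAlgAut ℝ _ U A) = frobSq A := by
  set V : Matrix (Fin n) (Fin n) ℝ := (U : Matrix (Fin n) (Fin n) ℝ)
  have hVt : star V = Vᵀ := by rw [star_eq_conjTranspose, conjTranspose_eq_transpose_of_trivial]
  have hV : Vᵀ * V = 1 := hVt ▸ Unitary.coe_star_mul_self U
  calc frobSq (Unitary.conjStarAlgAut ℝ _ U A) = trace ((V * A * Vᵀ)ᵀ * (V * A * Vᵀ)) := by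
        rw [frobSq, Unitary.conjStarAlgAut_apply, hVt]
    _ = trace (V * (Aᵀ * A) * Vᵀ) := by
        simp only [transpose_mul, transpose_transpose, mul_assoc, ← mul_assoc Vᵀ V, hV, one_mul]
    _ = frobSq A := by rw [trace_mul_cycle, hV, one_mul, frobSq]

theorem frobSq_diagonal_le_of_exp_eq (μ : Fin n → ℝ) (W : Matrix (Fin n) (Fin n) ℝ)
    (h : exp W = exp (diagonal μ)) : frobSq (diagonal μ) ≤ frobSq W := by
  set D := diagonal μ
  have hcomm : Commute D W := by
    refine commute_diagonal_of_commute_diagonal_comp Real.exp_injective ?_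
    have hexpW : diagonal (Real.exp ∘ μ) = exp W := by
      rw [h, exp_diagonal, Pi.exp_def, Real.exp_eq_exp_ℝ]
      rfl
    rw [hexpW]
    exact (Commute.refl W).exp_left
  have hexp : exp (W - D) = 1 := by
    have hsplit := Matrix.exp_add_of_commute (W - D) D (hcomm.symm.sub_left (Commute.refl D))
    rw [sub_add_cancel, h] at hsplit
    exact (isUnit_exp D).mul_eq_right.mp hsplit.symm
  have htrace : trace (D * (W - D)) = 0 :=
    trace_diagonal_mul_eq_zero_of_exp_eq_one μ _ (hcomm.sub_right (Commute.refl D)) hexp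
  calc frobSq D ≤ frobSq D + frobSq (W - D) := le_add_of_nonneg_right (frobSq_nonneg _)
    _ = frobSq (D + (W - D)) := by rw [frobSq_add, diagonal_transpose, htrace]; ring
    _ = frobSq W := by rw [add_sub_cancel]

end FrobeniusNorm

theorem stmt6_general (n : ℕ) (X S : Matrix (Fin n) (Fin n) ℝ)
    (hSsym : Sᵀ = S) (hS : NormedSpace.exp S = NormedSpace.exp X) :
    frobSq S ≤ frobSq X := by
  have hSherm : S.IsHermitian := by
    rwa [IsHermitian, conjTranspose_eq_transpose_of_trivial]
  set U := hSherm.eigenvectorUnitary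
  set D := diagonal hSherm.eigenvalues
  have hSD : S = Unitary.conjStarAlgAut ℝ _ U D := by
    simpa only [RCLike.ofReal_real_eq_id, Function.id_comp] using hSherm.spectral_theorem
  obtain ⟨W, rfl⟩ := EquivLike.surjective (Unitary.conjStarAlgAut ℝ _ U) X
  have hexp : exp W = exp D := EquivLike.injective (Unitary.conjStarAlgAut ℝ _ U) <| by
    rw [← exp_conjStarAlgAut, ← exp_conjStarAlgAut, ← hSD, hS]
  rw [hSD, frobSq_conjStarAlgAut, frobSq_conjStarAlgAut]
  exact frobSq_diagonal_le_of_exp_eq _ _ hexp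

/-- Among all real matrix logarithms X of a symmetric positive definite matrix P = exp X,
the principal (symmetric) logarithm S has minimal Frobenius norm: ‖X‖² ≥ ‖S‖². -/
theorem stmt6 (n : ℕ) (X S : Matrix (Fin n) (Fin n) ℝ)
    (hPsym : (NormedSpace.exp X)ᵀ = NormedSpace.exp X)
    (hPpos : (NormedSpace.exp X).PosDef)
    (hSsym : Sᵀ = S) (hS : NormedSpace.exp S = NormedSpace.exp X) :
    frobSq S ≤ frobSq X :=
  stmt6_general n X S hSsym hS
end

section
/- Let μ, μ_c > 0 and let ξ ∈ ℝ^{n×n}. Define γ(t) = F · exp(t(sym ξ − (μ_c/μ) skew ξ)) · exp(t(1 + μ_c/μ) skew ξ) for F ∈ GL⁺(n,ℝ). Then γ(t) ∈ GL⁺(n,ℝ) for all t ∈ ℝ, γ(0) = F, and γ'(t) = γ(t) · Ad_{exp(−t(1+μ_c/μ) skew ξ)}(sym ξ − (μ_c/μ) skew ξ) + γ(t)·(1+μ_c/μ) skew ξ evaluated appropriately; in particular γ'(0) = F·ξ. -/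
/-!
γ is F times a product of two one-parameter subgroups `exp (t • A)` and `exp (t • B)`.
Every real matrix exponential is a square, `exp M = exp (M/2) ^ 2`, so its determinant is
positive. The product rule gives `γ' = F e^{tA} A e^{tB} + F e^{tA} e^{tB} B`, and inserting
`e^{tB} e^{-tB} = 1` in the first term turns it into the stated conjugated form. At `t = 0`
the velocity is `F (A + B)`, and `A + B = sym ξ + skew ξ = ξ`.
-/

open Matrix

attribute [local instance] Matrix.frobeniusNormedAddCommGroup Matrix.frobeniusNormedRing Matrix.frobeniusNormedSpace

attribute [local instance] Matrix.frobeniusNormedAlgebra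

theorem Matrix.det_exp_pos {m : Type*} [Fintype m] [DecidableEq m] (M : Matrix m m ℝ) :
    0 < (NormedSpace.exp M).det := by
  have hsq : NormedSpace.exp M = NormedSpace.exp ((2⁻¹ : ℝ) • M) ^ 2 := by
    rw [← Matrix.exp_nsmul, ← Nat.cast_smul_eq_nsmul ℝ, smul_smul]
    norm_num
  have hne : (NormedSpace.exp ((2⁻¹ : ℝ) • M)).det ≠ 0 :=
    ((Matrix.isUnit_exp ((2⁻¹ : ℝ) • M)).map Matrix.detMonoidHom).ne_zero
  rw [hsq, Matrix.det_pow]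
  exact pow_two_pos_of_ne_zero hne

theorem hasDerivAt_mul_exp_smul_mul_exp_smul {𝕂 𝔸 : Type*} [RCLike 𝕂] [NormedRing 𝔸]
    [NormedAlgebra 𝕂 𝔸] [CompleteSpace 𝔸] (F A B : 𝔸) (t : 𝕂) :
    HasDerivAt (fun s : 𝕂 => F * NormedSpace.exp (s • A) * NormedSpace.exp (s • B))
      (F * NormedSpace.exp (t • A) * NormedSpace.exp (t • B) *
        (NormedSpace.exp (-(t • B)) * A * NormedSpace.exp (t • B) + B)) t := by
  -- `exp_add_of_commute` is stated for `ℚ`-algebras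
  let +nondep : NormedAlgebra ℚ 𝔸 := .restrictScalars ℚ 𝕂 𝔸
  have hinv : NormedSpace.exp (t • B) * NormedSpace.exp (-(t • B)) = 1 := by
    rw [← NormedSpace.exp_add_of_commute (Commute.refl _).neg_right, add_neg_cancel,
      NormedSpace.exp_zero]
  refine (((hasDerivAt_exp_smul_const A t).const_mul F).mul
    (hasDerivAt_exp_smul_const B t)).congr_deriv ?_
  simp only [mul_add, mul_assoc]
  rw [← mul_assoc (NormedSpace.exp (t • B)), hinv, one_mul]

theorem symPart_add_skewPart {n : ℕ} (X : Matrix (Fin n) (Fin n) ℝ) :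
    symPart X + skewPart X = X := by
  unfold symPart skewPart
  module

theorem stmt9_general (n : ℕ) (μ μc : ℝ)
    (F ξ : Matrix (Fin n) (Fin n) ℝ) (hF : 0 < F.det)
    (γ : ℝ → Matrix (Fin n) (Fin n) ℝ)
    (hγ : γ = fun t => F * NormedSpace.exp (t • (symPart ξ - (μc / μ) • skewPart ξ)) *
        NormedSpace.exp (t • ((1 + μc / μ) • skewPart ξ))) :
    (∀ t : ℝ, 0 < (γ t).det) ∧ γ 0 = F ∧
    (∀ t : ℝ, HasDerivAt γ
      (γ t * (NormedSpace.exp (-(t • ((1 + μc / μ) • skewPart ξ))) *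
          (symPart ξ - (μc / μ) • skewPart ξ) *
          NormedSpace.exp (t • ((1 + μc / μ) • skewPart ξ)) +
        (1 + μc / μ) • skewPart ξ)) t) ∧
    HasDerivAt γ (F * ξ) 0 := by
  subst hγ
  have hsum : symPart ξ - (μc / μ) • skewPart ξ + (1 + μc / μ) • skewPart ξ = ξ := by
    conv_rhs => rw [← symPart_add_skewPart ξ]
    module
  refine ⟨fun t => ?_, by simp, fun t => hasDerivAt_mul_exp_smul_mul_exp_smul _ _ _ t, ?_⟩
  · simp only [Matrix.det_mul]
    exact mul_pos (mul_pos hF (Matrix.det_exp_pos _)) (Matrix.det_exp_pos _)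
  · refine (hasDerivAt_mul_exp_smul_mul_exp_smul _ _ _ 0).congr_deriv ?_
    simp [hsum]

/-- The geodesic curve γ(t) = F exp(t(sym ξ − (μc/μ) skew ξ)) exp(t(1+μc/μ) skew ξ) stays
in GL⁺(n), starts at F, has velocity
γ'(t) = γ(t)·(Ad_{exp(−t(1+μc/μ) skew ξ)}(sym ξ − (μc/μ) skew ξ) + (1+μc/μ) skew ξ),
and in particular γ'(0) = F·ξ. -/
theorem stmt9 (n : ℕ) (μ μc : ℝ) (hμ : 0 < μ) (hμc : 0 < μc)
    (F ξ : Matrix (Fin n) (Fin n) ℝ) (hF : 0 < F.det)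
    (γ : ℝ → Matrix (Fin n) (Fin n) ℝ)
    (hγ : γ = fun t => F * NormedSpace.exp (t • (symPart ξ - (μc / μ) • skewPart ξ)) *
        NormedSpace.exp (t • ((1 + μc / μ) • skewPart ξ))) :
    (∀ t : ℝ, 0 < (γ t).det) ∧ γ 0 = F ∧
    (∀ t : ℝ, HasDerivAt γ
      (γ t * (NormedSpace.exp (-(t • ((1 + μc / μ) • skewPart ξ))) *
          (symPart ξ - (μc / μ) • skewPart ξ) *
          NormedSpace.exp (t • ((1 + μc / μ) • skewPart ξ)) +
        (1 + μc / μ) • skewPart ξ)) t) ∧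
    HasDerivAt γ (F * ξ) 0 :=
  stmt9_general n μ μc F ξ hF γ hγ
end

section
/- Let F ∈ GL⁺(n,ℝ) with polar decomposition F = R·U, where U is symmetric positive definite, and let ξ = −log U (principal logarithm). Then for any μ, μ_c > 0, since skew ξ = 0, the geodesic γ(t) = F·exp(t(sym ξ − (μ_c/μ) skew ξ))·exp(t(1+μ_c/μ) skew ξ) reduces to γ(t) = F·exp(−t log U), and γ(1) = F·exp(−log U) = R ∈ SO(n); i.e., choosing ξ = −log U in the geodesic formula connects F to its polar factor R. -/
open Matrix

/-- With ξ = −log U (symmetric, so skew ξ = 0), the geodesic reduces to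
γ(t) = F·exp(−t log U) and connects F to its polar factor: γ(1) = R ∈ SO(n). -/
theorem stmt11 (n : ℕ) (μ μc : ℝ) (hμ : 0 < μ) (hμc : 0 < μc)
    (F R U S : Matrix (Fin n) (Fin n) ℝ)
    (hF : 0 < F.det) (hR : R ∈ SOn n)
    (hUsym : Uᵀ = U) (hUpos : U.PosDef) (hUsq : U * U = Fᵀ * F)
    (hpolar : F = R * U)
    (hSsym : Sᵀ = S) (hS : NormedSpace.exp S = U) :
    (∀ t : ℝ,
      F * NormedSpace.exp (t • (symPart (-S) - (μc / μ) • skewPart (-S))) *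
          NormedSpace.exp (t • ((1 + μc / μ) • skewPart (-S)))
        = F * NormedSpace.exp (-(t • S))) ∧
    F * NormedSpace.exp (-((1 : ℝ) • S)) = R ∧ R ∈ SOn n := by
  have hskew : skewPart (-S) = 0 := by
    simp [skewPart, transpose_neg, hSsym]
  have hsym : symPart (-S) = -S := by
    simp [symPart, transpose_neg, hSsym]; module
  have hinv : U * NormedSpace.exp (-S) = 1 := by
    rw [← hS, ← Matrix.exp_add_of_commute S (-S) ((Commute.refl S).neg_right)]
    simp
  have hend : F * NormedSpace.exp (-S) = R := by
    rw [hpolar, mul_assoc, hinv, mul_one]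
  refine ⟨fun t => ?_, ?_, hR⟩
  · rw [hskew, hsym]
    simp [NormedSpace.exp_zero]
  · simpa using hend
end

section
/- If φ : Ω → ℝⁿ is a C¹ map on a connected open set Ω ⊆ ℝⁿ such that ∇φ(x) ∈ SO(n) for every x ∈ Ω, then ∇φ is constant; hence φ(x) = Q·x + b for a fixed rotation Q ∈ SO(n) and vector b (Liouville-type rigidity for smooth maps). -/
/-! The derivative of `φ` is everywhere a linear isometry, so by the mean value inequality `φ` is
locally 1-Lipschitz, and so is its local inverse given by the inverse function theorem: near each
point `φ` preserves distances. By polarization it then preserves inner products of differences,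
and differentiating this identity shows that `φ` coincides near each point with its first-order
Taylor polynomial. The affine data `(∇φ(x), φ(x) - ∇φ(x) x)` is therefore locally constant, hence
constant on the connected set `Ω`. -/

open RealInnerProductSpace Metric Set Filter Topology

theorem eventually_fderiv_eq_of_eventually_eq_add {𝕜 E F : Type*} [NontriviallyNormedField 𝕜]
    [NormedAddCommGroup E] [NormedSpace 𝕜 E] [NormedAddCommGroup F] [NormedSpace 𝕜 F]
    {f : E → F} {T : E →L[𝕜] F} {x : E} (h : ∀ᶠ y in 𝓝 x, f y = f x + T (y - x)) :
    ∀ᶠ y in 𝓝 x, fderiv 𝕜 f y = T ∧ f y - T y = f x - T x := by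
  have h' : ∀ᶠ y in 𝓝 x, f y = (f x - T x) + T y :=
    h.mono fun y hy => by rw [hy, map_sub]; abel
  filter_upwards [h'.eventually_nhds] with y hy
  refine ⟨(T.hasFDerivAt.const_add _).congr_of_eventuallyEq hy |>.fderiv, ?_⟩
  rw [hy.self_of_nhds]
  abel

section InnerProductSpace

variable {E F : Type*} [NormedAddCommGroup E] [InnerProductSpace ℝ E]
  [NormedAddCommGroup F] [InnerProductSpace ℝ F]

theorem ContinuousLinearMap.exists_linearIsometryEquiv_eq [FiniteDimensional ℝ E]
    (T : E →L[ℝ] E) (hT : ∀ v w, ⟪T v, T w⟫ = ⟪v, w⟫) :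
    ∃ e : E ≃ₗᵢ[ℝ] E, (e.toContinuousLinearEquiv : E →L[ℝ] E) = T :=
  ⟨(T.toLinearMap.isometryOfInner hT).toLinearIsometryEquiv rfl, rfl⟩

theorem Convex.lipschitzOnWith_one_of_hasFDerivAt_linearIsometryEquiv {f : E → F} {s : Set E}
    (hs : Convex ℝ s)
    (hf : ∀ y ∈ s, ∃ e : E ≃ₗᵢ[ℝ] F, HasFDerivAt f (e.toContinuousLinearEquiv : E →L[ℝ] F) y) :
    LipschitzOnWith 1 f s := by
  refine hs.lipschitzOnWith_of_nnnorm_fderiv_le (𝕜 := ℝ) (fun y hy => ?_) (fun y hy => ?_)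
  · obtain ⟨e, he⟩ := hf y hy
    exact he.differentiableAt
  · obtain ⟨e, he⟩ := hf y hy
    rw [he.fderiv, ← NNReal.coe_le_coe, coe_nnnorm, NNReal.coe_one]
    exact e.toLinearIsometry.norm_toContinuousLinearMap_le

theorem OpenPartialHomeomorph.exists_mem_nhds_dist_eq [CompleteSpace E]
    (h : OpenPartialHomeomorph E F)
    (hd : ∀ y ∈ h.source, ∃ e : E ≃ₗᵢ[ℝ] F,
      HasFDerivAt h (e.toContinuousLinearEquiv : E →L[ℝ] F) y)
    {x : E} (hx : x ∈ h.source) :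
    ∃ s ∈ 𝓝 x, ∀ y ∈ s, ∀ z ∈ s, dist (h y) (h z) = dist y z := by
  obtain ⟨ρ, hρ, hρt⟩ := isOpen_iff.mp h.open_target _ (h.map_source hx)
  have hlip_symm : LipschitzOnWith 1 h.symm (ball (h x) ρ) := by
    refine (convex_ball _ _).lipschitzOnWith_one_of_hasFDerivAt_linearIsometryEquiv fun a ha => ?_
    obtain ⟨e, he⟩ := hd _ (h.map_target (hρt ha))
    exact ⟨e.symm, h.hasFDerivAt_symm (hρt ha) he⟩
  have hnhds : h.source ∩ h ⁻¹' ball (h x) ρ ∈ 𝓝 x :=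
    inter_mem (h.open_source.mem_nhds hx)
      ((h.continuousAt hx).preimage_mem_nhds (ball_mem_nhds _ hρ))
  obtain ⟨r, hr, hrsub⟩ := Metric.mem_nhds_iff.mp hnhds
  have hlip : LipschitzOnWith 1 h (ball x r) :=
    (convex_ball _ _).lipschitzOnWith_one_of_hasFDerivAt_linearIsometryEquiv
      fun y hy => hd y (hrsub hy).1
  refine ⟨ball x r, ball_mem_nhds x hr, fun y hy z hz => le_antisymm ?_ ?_⟩
  · simpa using hlip.dist_le_mul y hy z hz
  · have := hlip_symm.dist_le_mul _ (hrsub hy).2 _ (hrsub hz).2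
    rwa [h.left_inv (hrsub hy).1, h.left_inv (hrsub hz).1, NNReal.coe_one, one_mul] at this

theorem HasFDerivAt.inner_apply_eq_of_eventually_inner_sub_eq {f : E → F} {T : E →L[ℝ] F}
    {x : E} (hf : HasFDerivAt f T x) {a : F} {b : E}
    (h : (fun z => ⟪a, f z - f x⟫) =ᶠ[𝓝 x] fun z => ⟪b, z - x⟫) (w : E) :
    ⟪a, T w⟫ = ⟪b, w⟫ := by
  have hl : HasFDerivAt (fun z => ⟪a, f z - f x⟫) ((innerSL ℝ a).comp T) x :=
    (innerSL ℝ a).hasFDerivAt.comp x (hf.sub_const (f x))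
  have hr : HasFDerivAt (fun z => ⟪b, z - x⟫) (innerSL ℝ b) x :=
    (innerSL ℝ b).hasFDerivAt.comp x ((hasFDerivAt_id x).sub_const x)
  simpa using congr($((hl.congr_of_eventuallyEq h.symm).unique hr) w)

theorem eqOn_add_of_dist_eq_of_hasFDerivAt {f : E → F} {T : E →L[ℝ] F} {x : E} {s : Set E}
    (hs : s ∈ 𝓝 x) (hiso : ∀ y ∈ s, ∀ z ∈ s, dist (f y) (f z) = dist y z)
    (hf : HasFDerivAt f T x) : ∀ y ∈ s, f y = f x + T (y - x) := by
  have hx : x ∈ s := mem_of_mem_nhds hs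
  have hpol : ∀ y ∈ s, ∀ z ∈ s, ⟪f y - f x, f z - f x⟫ = ⟪y - x, z - x⟫ := by
    intro y hy z hz
    have himg := norm_sub_sq_real (f y - f x) (f z - f x)
    have hsrc := norm_sub_sq_real (y - x) (z - x)
    simp only [sub_sub_sub_cancel_right, ← dist_eq_norm, hiso _ hy _ hz, hiso _ hy _ hx,
      hiso _ hz _ hx] at himg hsrc
    linarith
  have hT : ∀ y ∈ s, ∀ w, ⟪f y - f x, T w⟫ = ⟪y - x, w⟫ := fun y hy =>
    hf.inner_apply_eq_of_eventually_inner_sub_eq (eventually_of_mem hs (hpol y hy))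
  have hT_norm : ∀ v, ‖T v‖ = ‖v‖ := by
    intro v
    have := hf.inner_apply_eq_of_eventually_inner_sub_eq (a := T v) (b := v)
      (eventually_of_mem hs fun y hy =>
        (real_inner_comm _ _).trans ((hT y hy v).trans (real_inner_comm _ _))) v
    rw [real_inner_self_eq_norm_sq, real_inner_self_eq_norm_sq] at this
    exact (sq_eq_sq₀ (norm_nonneg _) (norm_nonneg _)).mp this
  intro y hy
  have hd := norm_sub_sq_real (f y - f x) (T (y - x))
  rw [hT y hy, hT_norm, ← dist_eq_norm (f y), ← dist_eq_norm y, hiso y hy x hx,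
    real_inner_self_eq_norm_sq, dist_eq_norm] at hd
  rw [← sub_eq_iff_eq_add', ← sub_eq_zero, ← norm_eq_zero, ← sq_eq_zero_iff]
  linarith

variable [CompleteSpace E] {Ω : Set E} {φ : E → F}

theorem eventually_eq_add_fderiv_of_fderiv_linearIsometryEquiv (hΩ : IsOpen Ω)
    (hφ : ContDiffOn ℝ 1 φ Ω)
    (hd : ∀ y ∈ Ω, ∃ e : E ≃ₗᵢ[ℝ] F, fderiv ℝ φ y = e.toContinuousLinearEquiv)
    {x : E} (hx : x ∈ Ω) : ∀ᶠ y in 𝓝 x, φ y = φ x + fderiv ℝ φ x (y - x) := by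
  have hderiv : ∀ y ∈ Ω, HasStrictFDerivAt φ (fderiv ℝ φ y) y := fun y hy =>
    (hφ.contDiffAt (hΩ.mem_nhds hy)).hasStrictFDerivAt one_ne_zero
  obtain ⟨e, he⟩ := hd x hx
  let h := ((he ▸ hderiv x hx).toOpenPartialHomeomorph φ).restrOpen Ω hΩ
  have hsource : h.source = _ ∩ Ω := OpenPartialHomeomorph.restrOpen_source _ _ _
  have hd' : ∀ y ∈ h.source, ∃ e : E ≃ₗᵢ[ℝ] F,
      HasFDerivAt h (e.toContinuousLinearEquiv : E →L[ℝ] F) y := by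
    intro y hy
    obtain ⟨e, he⟩ := hd y (hsource ▸ hy).2
    exact ⟨e, he ▸ (hderiv y (hsource ▸ hy).2).hasFDerivAt⟩
  have hxh : x ∈ h.source :=
    hsource ▸ ⟨HasStrictFDerivAt.mem_toOpenPartialHomeomorph_source _, hx⟩
  obtain ⟨s, hs, hiso⟩ := h.exists_mem_nhds_dist_eq hd' hxh
  exact eventually_of_mem hs <|
    eqOn_add_of_dist_eq_of_hasFDerivAt hs hiso (hderiv x hx).hasFDerivAt

theorem IsPreconnected.fderiv_eq_and_sub_eq_of_fderiv_linearIsometryEquiv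
    (hΩc : IsPreconnected Ω) (hΩ : IsOpen Ω) (hφ : ContDiffOn ℝ 1 φ Ω)
    (hd : ∀ y ∈ Ω, ∃ e : E ≃ₗᵢ[ℝ] F, fderiv ℝ φ y = e.toContinuousLinearEquiv)
    {x₀ x : E} (hx₀ : x₀ ∈ Ω) (hx : x ∈ Ω) :
    fderiv ℝ φ x = fderiv ℝ φ x₀ ∧ φ x - fderiv ℝ φ x x = φ x₀ - fderiv ℝ φ x₀ x₀ := by
  let A : E → (E →L[ℝ] F) × F := fun z => (fderiv ℝ φ z, φ z - fderiv ℝ φ z z)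
  have hA : ∀ y ∈ Ω, ∃ c, A =ᶠ[𝓝 y] fun _ => c := fun y hy =>
    ⟨A y, (eventually_fderiv_eq_of_eventually_eq_add
      (eventually_eq_add_fderiv_of_fderiv_linearIsometryEquiv hΩ hφ hd hy)).mono
        fun _ hz => by simp only [A, hz.1, hz.2]⟩
  exact Prod.ext_iff.mp (eq_of_germ_isConstant_on (f := A) hA hΩc hx hx₀)

end InnerProductSpace

/-- Liouville-type rigidity: if φ : Ω → ℝⁿ is C¹ on a connected open set Ω and
∇φ(x) ∈ SO(n) for every x ∈ Ω (i.e. ∇φ(x) preserves the inner product and has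
determinant 1), then ∇φ is constant and φ(x) = Q·x + b for a fixed rotation Q. -/
theorem stmt17 (n : ℕ) (Ω : Set (EuclideanSpace ℝ (Fin n)))
    (hΩo : IsOpen Ω) (hΩc : IsConnected Ω)
    (φ : EuclideanSpace ℝ (Fin n) → EuclideanSpace ℝ (Fin n))
    (hφ : ContDiffOn ℝ 1 φ Ω)
    (hSO : ∀ x ∈ Ω,
      (∀ v w : EuclideanSpace ℝ (Fin n), ⟪fderiv ℝ φ x v, fderiv ℝ φ x w⟫ = ⟪v, w⟫) ∧
      LinearMap.det ((fderiv ℝ φ x : EuclideanSpace ℝ (Fin n) →L[ℝ] EuclideanSpace ℝ (Fin n)) :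
        EuclideanSpace ℝ (Fin n) →ₗ[ℝ] EuclideanSpace ℝ (Fin n)) = 1) :
    ∃ (Q : EuclideanSpace ℝ (Fin n) →L[ℝ] EuclideanSpace ℝ (Fin n))
      (b : EuclideanSpace ℝ (Fin n)),
      (∀ v w : EuclideanSpace ℝ (Fin n), ⟪Q v, Q w⟫ = ⟪v, w⟫) ∧
      LinearMap.det (Q : EuclideanSpace ℝ (Fin n) →ₗ[ℝ] EuclideanSpace ℝ (Fin n)) = 1 ∧
      (∀ x ∈ Ω, fderiv ℝ φ x = Q) ∧
      (∀ x ∈ Ω, φ x = Q x + b) := by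
  obtain ⟨x₀, hx₀⟩ := hΩc.nonempty
  have hd : ∀ y ∈ Ω, ∃ e : EuclideanSpace ℝ (Fin n) ≃ₗᵢ[ℝ] EuclideanSpace ℝ (Fin n),
      fderiv ℝ φ y = e.toContinuousLinearEquiv := fun y hy =>
    ((fderiv ℝ φ y).exists_linearIsometryEquiv_eq (hSO y hy).1).imp fun _ he => he.symm
  have hconst := fun x (hx : x ∈ Ω) =>
    hΩc.isPreconnected.fderiv_eq_and_sub_eq_of_fderiv_linearIsometryEquiv hΩo hφ hd hx₀ hx
  refine ⟨fderiv ℝ φ x₀, φ x₀ - fderiv ℝ φ x₀ x₀, (hSO x₀ hx₀).1, (hSO x₀ hx₀).2,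
    fun x hx => (hconst x hx).1, fun x hx => ?_⟩
  obtain ⟨hQ, hb⟩ := hconst x hx
  rw [← hb, ← hQ]
  abel
end
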